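/- The fully-fused loop nest forest construction is well-defined and injective on loop orders: distinct loop orders A ≠ A' (as lists of index lists) yield distinct forests F(A) ≠ F(A'), provided no index list contains repeated indices. -/

import Mathlib

/-- Labeled ordered trees of a fully-fused loop nest forest: internal vertices are
loop indices, leaves are term positions. -/
inductive LoopTree (ι : Type) : Type where
  | leaf : ℕ → LoopTree ι
  | node : ι → List (LoopTree ι) → LoopTree ι

/-- Measure used for termination of the forest construction. -/
def buildMeasure {ι : Type} (A : List (ℕ × List ι)) : ℕ :=
  A.length + (A.map (fun p => p.2.length)).sum

/-- Construction of the fully-fused loop nest forest by iterated peeling: the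
first maximal group of terms sharing the same first index becomes a tree rooted
at that index, built recursively from the tails; exhausted terms become leaves
labeled by their term position. -/
def buildForest {ι : Type} [DecidableEq ι] : List (ℕ × List ι) → List (LoopTree ι)
  | [] => []
  | (n, []) :: rest => LoopTree.leaf n :: buildForest rest
  | (n, q :: qs) :: rest =>
      let pre := ((n, q :: qs) :: rest).takeWhile (fun p => p.2.head? = some q)
      let post := ((n, q :: qs) :: rest).dropWhile (fun p => p.2.head? = some q)
      LoopTree.node q (buildForest (pre.map (fun p => (p.1, p.2.tail))))
        :: buildForest post
  termination_by A => buildMeasure A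
  decreasing_by
  · simp [buildMeasure]
  · have h1 : (rest.takeWhile (fun p => decide (p.2.head? = some q))).length
        ≤ rest.length := (List.takeWhile_sublist _).length_le
    have h2 : ((rest.takeWhile (fun p => decide (p.2.head? = some q))).map
          (fun p : ℕ × List ι => p.2.length - 1)).sum
        ≤ ((rest.takeWhile (fun p => decide (p.2.head? = some q))).map
          (fun p : ℕ × List ι => p.2.length)).sum :=
      List.sum_le_sum (fun p _ => Nat.sub_le _ _)
    have h3 : ((rest.takeWhile (fun p => decide (p.2.head? = some q))).map
          (fun p : ℕ × List ι => p.2.length)).sum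
        ≤ (rest.map (fun p : ℕ × List ι => p.2.length)).sum :=
      ((List.takeWhile_sublist _).map _).sum_le_sum (by intro a _; positivity)
    simp only [buildMeasure, List.takeWhile_cons, List.head?_cons, Option.some.injEq,
      decide_eq_true_eq, if_true, List.map_cons, List.map_map, List.length_cons,
      List.length_map, List.sum_cons, Function.comp_def, List.length_tail]
    omega
  · have h1 : (rest.dropWhile (fun p => decide (p.2.head? = some q))).length
        ≤ rest.length := (List.dropWhile_sublist _).length_le
    have h3 : ((rest.dropWhile (fun p => decide (p.2.head? = some q))).map
          (fun p : ℕ × List ι => p.2.length)).sum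
        ≤ (rest.map (fun p : ℕ × List ι => p.2.length)).sum :=
      ((List.dropWhile_sublist _).map _).sum_le_sum (by intro a _; positivity)
    simp only [buildMeasure, List.dropWhile_cons, List.head?_cons, Option.some.injEq,
      decide_eq_true_eq, if_true, List.length_cons, List.map_cons, List.sum_cons]
    omega

/-- Left inverse of `buildForest`. -/
def recover {ι : Type} : List (LoopTree ι) → List (ℕ × List ι)
  | [] => []
  | .leaf n :: ts => (n, []) :: recover ts
  | .node q cs :: ts => (recover cs).map (fun p => (p.1, q :: p.2)) ++ recover ts

theorem recover_buildForest {ι : Type} [DecidableEq ι] (A : List (ℕ × List ι)) :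
    recover (buildForest A) = A := by
  induction A using buildForest.induct with
  | case1 => simp [buildForest, recover]
  | case2 n rest ih => simp [buildForest, recover, ih]
  | case3 n q qs rest pre post ihpre ihpost =>
    rw [buildForest]
    simp only [recover, ihpre, ihpost, List.map_map]
    have hmem : ∀ p ∈ pre, p.2.head? = some q := by
      intro p hp; simpa using List.mem_takeWhile_imp hp
    have h1 : pre.map ((fun p : ℕ × List ι => (p.1, q :: p.2)) ∘
        (fun p : ℕ × List ι => (p.1, p.2.tail))) = pre := by
      conv_rhs => rw [← List.map_id pre]
      apply List.map_congr_left
      intro p hp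
      have h := hmem p hp
      obtain ⟨a, b⟩ := p
      cases b with
      | nil => simp at h
      | cons x xs => simp_all
    show List.map (fun p : ℕ × List ι => (p.1, q :: p.2))
        (recover (buildForest (List.map (fun p : ℕ × List ι => (p.1, p.2.tail)) pre)))
        ++ recover (buildForest post) = _
    rw [ihpre, ihpost, List.map_map, h1]
    exact List.takeWhile_append_dropWhile ..

/-- The fully-fused loop nest forest construction is injective on loop orders:
distinct loop orders (lists of duplicate-free index lists, with leaves labeled by
term positions) yield distinct forests. -/
theorem stmt_19 {ι : Type} [DecidableEq ι] (A A' : List (List ι))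
    (hA : ∀ l ∈ A, l.Nodup) (hA' : ∀ l ∈ A', l.Nodup)
    (h : buildForest (A.zipIdx.map Prod.swap) = buildForest (A'.zipIdx.map Prod.swap)) :
    A = A' := by
  have he : A.zipIdx.map Prod.swap = A'.zipIdx.map Prod.swap := by
    rw [← recover_buildForest (A.zipIdx.map Prod.swap), h, recover_buildForest]
  calc A = (A.zipIdx.map Prod.swap).map Prod.snd := by simp; exact (List.zipIdx_map_fst 0 A).symm
    _ = (A'.zipIdx.map Prod.swap).map Prod.snd := by rw [he]
    _ = A' := by simp; exact List.zipIdx_map_fst 0 A'
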